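/- Let X be a pure k-dimensional simplicial complex, f : X(k) → {±1}, X̂ the f-local lift, and σ̂ ∈ X̂ with σ = π(σ̂). If dim(σ̂) < k-2, then the second largest in absolute value eigenvalue of the random walk matrix of the 1-skeleton of X̂_{σ̂} equals that of X_σ. If dim(σ̂) = k-2, then the spectrum of the random walk matrix of X̂_{σ̂} is the union (with multiplicity) of the spectrum of the random walk matrix A_σ of X_σ and the spectrum of the signed matrix A_σ^{f_{σ̂}}. -/

import Mathlib

open scoped Classical
noncomputable section

namespace HDX

variable {V W : Type*}

/-- sign of a Bool as an integer (`true ↦ 1`, `false ↦ -1`). -/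
def sgn (b : Bool) : ℤ := if b then 1 else -1

/-- projection forgetting signs -/
def proj [DecidableEq V] (σ : Finset (V × Bool)) : Finset V := σ.image Prod.fst

/-- product of the signs of a decorated face -/
def signF (σ : Finset (V × Bool)) : ℤ := ∏ x ∈ σ, sgn x.2

/-- the `f`-local lift of a `k`-dimensional complex `X` -/
def localLift [Fintype V] [DecidableEq V] (X : Finset (Finset V)) (f : Finset V → ℤ)
    (k : ℕ) : Finset (Finset (V × Bool)) :=
  Finset.univ.filter (fun σ' => proj σ' ∈ X ∧ σ'.card = (proj σ').card ∧
    (σ'.card = k + 1 → signF σ' = f (proj σ')))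

/-- the link of a face -/
def link [DecidableEq W] (X : Finset (Finset W)) (σ : Finset W) : Finset (Finset W) :=
  (X.filter (fun τ => σ ⊆ τ)).image (fun τ => τ \ σ)

/-- degree of a face: the number of faces of one higher dimension containing it -/
def deg [DecidableEq W] (X : Finset (Finset W)) (σ : Finset W) : ℕ :=
  (X.filter (fun τ => σ ⊆ τ ∧ τ.card = σ.card + 1)).card

/-- a simplicial complex: downward closed (to nonempty subsets) -/
def DownwardClosed (X : Finset (Finset W)) : Prop :=
  ∀ τ ∈ X, ∀ σ : Finset W, σ ⊆ τ → σ.Nonempty → σ ∈ X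

/-- pure `k`-dimensional -/
def Pure (X : Finset (Finset W)) (k : ℕ) : Prop :=
  (∀ τ ∈ X, τ.card ≤ k + 1) ∧ ∀ τ ∈ X, ∃ ρ ∈ X, τ ⊆ ρ ∧ ρ.card = k + 1

/-- `(d 0, …, d (k-1))`-regular -/
def Regular (X : Finset (Finset W)) (k : ℕ) (d : ℕ → ℕ) : Prop :=
  ∀ i < k, ∀ σ ∈ X, σ.card = i + 1 → deg X σ = d i

/-- the vertices of the link of `σ` -/
def linkVert [DecidableEq W] (X : Finset (Finset W)) (σ : Finset W) : Type _ :=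
  {v : W // {v} ∈ link X σ}

instance [Fintype W] [DecidableEq W] (X : Finset (Finset W)) (σ : Finset W) :
    Fintype (linkVert X σ) := Subtype.fintype _

instance [DecidableEq W] (X : Finset (Finset W)) (σ : Finset W) :
    DecidableEq (linkVert X σ) := Subtype.instDecidableEq

/-- random walk matrix of the 1-skeleton of the link of `σ`, normalized by `dreg` -/
def linkRW [Fintype W] [DecidableEq W] (X : Finset (Finset W)) (σ : Finset W) (dreg : ℕ) :
    Matrix (linkVert X σ) (linkVert X σ) ℝ :=
  fun u w => if u.1 ≠ w.1 ∧ {u.1, w.1} ∈ link X σ then (dreg : ℝ)⁻¹ else 0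

/-- signed random walk matrix of the 1-skeleton of the link of `σ` -/
def linkRWSigned [Fintype W] [DecidableEq W] (X : Finset (Finset W)) (σ : Finset W)
    (dreg : ℕ) (g : Finset W → ℤ) : Matrix (linkVert X σ) (linkVert X σ) ℝ :=
  fun u w => if u.1 ≠ w.1 ∧ {u.1, w.1} ∈ link X σ then (g {u.1, w.1} : ℝ) / (dreg : ℝ) else 0

/-- largest absolute value of the eigenvalues other than (one copy of) the trivial
eigenvalue `1`, of a matrix: computed via the roots of the characteristic polynomial. -/
def lam {n : Type*} [Fintype n] [DecidableEq n] (M : Matrix n n ℝ) : ℝ :=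
  (((M.charpoly.roots).erase 1).map (fun x => |x|)).fold max 0

/-- `λ`-two sided high dimensional expander (links normalized by their regular degrees) -/
def IsHDX [Fintype W] [DecidableEq W] (X : Finset (Finset W)) (k : ℕ) (d : ℕ → ℕ)
    (l : ℝ) : Prop :=
  ∀ σ : Finset W, (σ = ∅ ∨ σ ∈ X) → σ.card ≤ k - 1 → lam (linkRW X σ (d σ.card)) ≤ l

/-- the ordered pairs in `S × T` that form an edge of the link of `σ` -/
def pairs [DecidableEq W] (X : Finset (Finset W)) (σ : Finset W) (S T : Finset W) :
    Finset (W × W) :=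
  (S ×ˢ T).filter (fun p => p.1 ≠ p.2 ∧ {p.1, p.2} ∈ link X σ)

/-- `⟨1_S, A_σ 1_T⟩` for the random walk matrix of the link of `σ` -/
def innerRW [DecidableEq W] (X : Finset (Finset W)) (σ : Finset W) (dtop : ℕ)
    (S T : Finset W) : ℝ :=
  ((pairs X σ S T).card : ℝ) / (dtop : ℝ)

/-- `⟨1_S, A_σ^g 1_T⟩` for the `g`-signed random walk matrix of the link of `σ` -/
def innerRWSigned [DecidableEq W] (X : Finset (Finset W)) (σ : Finset W) (dtop : ℕ)
    (g : Finset W → ℤ) (S T : Finset W) : ℝ :=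
  (∑ p ∈ pairs X σ S T, (g {p.1, p.2} : ℝ)) / (dtop : ℝ)

/-- `(β, t)`-sparseness -/
def IsSparse [Fintype W] [DecidableEq W] (X : Finset (Finset W)) (k dtop : ℕ)
    (β t : ℝ) : Prop :=
  ∀ σ ∈ X, σ.card = k - 1 → ∀ S T : Finset W,
    (∀ v ∈ S ∪ T, {v} ∈ link X σ) → ((S ∪ T).card : ℝ) ≤ t →
    innerRW X σ dtop S T ≤ β * Real.sqrt ((S.card : ℝ) * (T.card : ℝ))

/-!
The vertices of the link of `σ̂` in the lift are the two signed copies of the vertices of `X_σ`,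
and two copies of distinct vertices span an edge of the lifted link iff the underlying pair is an
edge of `X_σ` and, when `dim σ̂ = k - 2`, the sign product of the resulting top face agrees with
`f`. Ordering the vertices by sign, the random walk matrix becomes the block matrix
`[[A₊, A₋], [A₋, A₊]]`, whose characteristic polynomial is that of `A₊ + A₋` times that of
`A₊ - A₋`. Below the top dimension both blocks are `A_σ / 2`, so the lift only contributes
zero eigenvalues; in dimension `k - 2` exactly one of the two lifts of each edge is present, so
`A₊ + A₋ = A_σ` and `A₊ - A₋ = A_σ^{f_σ̂}`.
-/

end HDX

namespace Matrix

open Polynomial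

theorem det_fromBlocks_self_swap {R n : Type*} [CommRing R] [Fintype n] [DecidableEq n]
    (A B : Matrix n n R) : (fromBlocks A B B A).det = (A + B).det * (A - B).det := by
  have h : fromBlocks 1 1 0 1 * fromBlocks A B B A * fromBlocks 1 (-1) 0 1 =
      fromBlocks (A + B) 0 B (A - B) := by
    simp only [fromBlocks_multiply, one_mul, mul_one, mul_zero, add_zero, mul_neg, neg_add_rev,
      zero_mul, zero_add, fromBlocks_inj, true_and]
    constructor <;> abel
  have := congrArg det h
  rw [det_mul, det_mul, det_fromBlocks_zero₂₁, det_fromBlocks_zero₂₁, det_fromBlocks_zero₁₂] at this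
  simpa using this

theorem charpoly_fromBlocks_self_swap {R n : Type*} [CommRing R] [Fintype n] [DecidableEq n]
    (A B : Matrix n n R) :
    (fromBlocks A B B A).charpoly = (A + B).charpoly * (A - B).charpoly := by
  have h_add : charmatrix (A + B) = charmatrix A - B.map C := by
    simp only [charmatrix, scalar_apply, map_add, RingHom.mapMatrix_apply]
    abel
  have h_sub : charmatrix (A - B) = charmatrix A - -B.map C := by
    simp only [charmatrix, scalar_apply, map_sub, RingHom.mapMatrix_apply, sub_neg_eq_add]
    abel
  rw [charpoly, charmatrix_fromBlocks, det_fromBlocks_self_swap, charpoly, charpoly, h_add, h_sub,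
    sub_neg_eq_add, ← sub_eq_add_neg]

end Matrix

namespace HDX

open Finset Polynomial

variable {V W : Type*}

theorem fold_max_zero_nonneg (s : Multiset ℝ) : 0 ≤ s.fold max 0 := by
  induction s using Multiset.induction_on with
  | empty => simp
  | cons a s ih =>
    rw [Multiset.fold_cons_left]
    exact ih.trans (le_max_right _ _)

theorem fold_max_add_replicate_zero (s : Multiset ℝ) (r : ℕ) :
    (s + Multiset.replicate r 0).fold max 0 = s.fold max 0 := by
  induction r with
  | zero => simp
  | succ r ih =>
    rw [Multiset.replicate_succ, Multiset.add_cons, Multiset.fold_cons_left, ih,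
      max_eq_right (fold_max_zero_nonneg s)]

theorem lam_eq_of_charpoly_eq_mul_X_pow {m n : Type*} [Fintype m] [DecidableEq m] [Fintype n]
    [DecidableEq n] {M : Matrix m m ℝ} {N : Matrix n n ℝ} {r : ℕ}
    (h : N.charpoly = M.charpoly * X ^ r) : lam N = lam M := by
  have h_roots : N.charpoly.roots = M.charpoly.roots + Multiset.replicate r 0 := by
    rw [h, roots_mul (mul_ne_zero M.charpoly_monic.ne_zero (pow_ne_zero _ X_ne_zero)),
      roots_pow, roots_X, Multiset.nsmul_singleton]
  have h_one : (1 : ℝ) ∉ Multiset.replicate r 0 := fun h =>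
    one_ne_zero (Multiset.eq_of_mem_replicate h)
  rw [lam, lam, h_roots, Multiset.erase_add_left_neg _ h_one, Multiset.map_add,
    Multiset.map_replicate, abs_zero, fold_max_add_replicate_zero]

theorem mem_link_iff [DecidableEq W] {X : Finset (Finset W)} {σ s : Finset W} :
    s ∈ link X σ ↔ Disjoint s σ ∧ σ ∪ s ∈ X := by
  simp only [link, mem_image, mem_filter]
  constructor
  · rintro ⟨τ, ⟨hτ, hστ⟩, rfl⟩
    exact ⟨sdiff_disjoint, by rwa [union_sdiff_of_subset hστ]⟩
  · rintro ⟨hd, hX⟩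
    exact ⟨σ ∪ s, ⟨hX, subset_union_left⟩, union_sdiff_cancel_left hd.symm⟩

theorem sgn_mul_self (b : Bool) : sgn b * sgn b = 1 := by
  cases b <;> rfl

theorem signF_eq_one_or_eq_neg_one (σ : Finset (V × Bool)) : signF σ = 1 ∨ signF σ = -1 := by
  refine Int.eq_one_or_neg_one_of_mul_eq_one (v := signF σ) ?_
  rw [signF, ← prod_mul_distrib]
  exact prod_eq_one fun x _ => sgn_mul_self x.2

section LocalLift

variable [Fintype V] [DecidableEq V] {X : Finset (Finset V)} {f : Finset V → ℤ} {k : ℕ}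
  {σ' : Finset (V × Bool)}

theorem mem_localLift_iff {τ : Finset (V × Bool)} :
    τ ∈ localLift X f k ↔
      proj τ ∈ X ∧ τ.card = (proj τ).card ∧ (τ.card = k + 1 → signF τ = f (proj τ)) := by
  simp [localLift]

theorem mem_link_localLift_iff (hmem : σ' ∈ localLift X f k) (s : Finset (V × Bool)) :
    s ∈ link (localLift X f k) σ' ↔
      (proj s).card = s.card ∧ proj s ∈ link X (proj σ') ∧
        (σ'.card + s.card = k + 1 → signF σ' * signF s = f (proj σ' ∪ proj s)) := by
  have hσ' : σ'.card = (proj σ').card := (mem_localLift_iff.1 hmem).2.1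
  have h_proj : (proj s).card ≤ s.card := card_image_le
  have h_union := card_union_add_card_inter (proj σ') (proj s)
  rw [mem_link_iff, mem_link_iff, mem_localLift_iff, proj, image_union, ← proj, ← proj]
  constructor
  · rintro ⟨hd, hX, hcard, hsign⟩
    rw [card_union_of_disjoint hd.symm] at hcard hsign
    have h_inter : (proj σ' ∩ proj s).card = 0 := by omega
    refine ⟨by omega, ⟨?_, hX⟩, fun htop => ?_⟩
    · exact (disjoint_iff_inter_eq_empty.2 (card_eq_zero.1 h_inter)).symm
    · rw [← hsign htop, signF, signF, signF, prod_union hd.symm]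
  · rintro ⟨hcard, ⟨hd, hX⟩, hsign⟩
    have hd' : Disjoint s σ' := hd.of_image_finset
    refine ⟨hd', hX, ?_, fun htop => ?_⟩
    · rw [card_union_of_disjoint hd'.symm, card_union_of_disjoint hd.symm]
      omega
    · rw [card_union_of_disjoint hd'.symm] at htop
      rw [← hsign htop, signF, signF, signF, prod_union hd'.symm]

theorem singleton_mem_link_localLift_iff (hmem : σ' ∈ localLift X f k) (hk : σ'.card < k)
    (p : V × Bool) : {p} ∈ link (localLift X f k) σ' ↔ {p.1} ∈ link X (proj σ') := by
  rw [mem_link_localLift_iff hmem, proj, image_singleton, card_singleton, card_singleton]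
  exact ⟨fun h => h.2.1, fun h => ⟨rfl, h, fun htop => absurd htop (by omega)⟩⟩

theorem pair_mem_link_localLift_iff (hmem : σ' ∈ localLift X f k) {p q : V × Bool} (hpq : p ≠ q) :
    {p, q} ∈ link (localLift X f k) σ' ↔
      p.1 ≠ q.1 ∧ {p.1, q.1} ∈ link X (proj σ') ∧
        (σ'.card + 2 = k + 1 → signF σ' * (sgn p.2 * sgn q.2) = f (proj σ' ∪ {p.1, q.1})) := by
  have h_sign : signF {p, q} = sgn p.2 * sgn q.2 := prod_pair hpq
  rw [mem_link_localLift_iff hmem, proj, image_insert, image_singleton, card_pair hpq,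
    card_pair_eq_two_iff, h_sign]

theorem linkRW_localLift_apply (hmem : σ' ∈ localLift X f k) (dd : ℕ)
    (x y : linkVert (localLift X f k) σ') :
    linkRW (localLift X f k) σ' dd x y =
      if x.1.1 ≠ y.1.1 ∧ {x.1.1, y.1.1} ∈ link X (proj σ') ∧
        (σ'.card + 2 = k + 1 →
          signF σ' * (sgn x.1.2 * sgn y.1.2) = f (proj σ' ∪ {x.1.1, y.1.1}))
      then (dd : ℝ)⁻¹ else 0 := by
  refine if_congr ⟨fun ⟨hxy, h⟩ => (pair_mem_link_localLift_iff hmem hxy).1 h, fun h => ?_⟩ rfl rfl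
  have hxy : x.1 ≠ y.1 := fun e => h.1 (congrArg Prod.fst e)
  exact ⟨hxy, (pair_mem_link_localLift_iff hmem hxy).2 h⟩

def liftVertEquiv (hmem : σ' ∈ localLift X f k) (hk : σ'.card < k) :
    linkVert (localLift X f k) σ' ≃ linkVert X (proj σ') ⊕ linkVert X (proj σ') where
  toFun x :=
    have hx := (singleton_mem_link_localLift_iff hmem hk x.1).1 x.2
    if x.1.2 then Sum.inl ⟨x.1.1, hx⟩ else Sum.inr ⟨x.1.1, hx⟩
  invFun := Sum.elim
    (fun v => ⟨(v.1, true), (singleton_mem_link_localLift_iff hmem hk _).2 v.2⟩)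
    (fun v => ⟨(v.1, false), (singleton_mem_link_localLift_iff hmem hk _).2 v.2⟩)
  left_inv := by rintro ⟨⟨v, _ | _⟩, h⟩ <;> rfl
  right_inv := by rintro (v | v) <;> rfl

theorem liftVertEquiv_symm_inl (hmem : σ' ∈ localLift X f k) (hk : σ'.card < k)
    (v : linkVert X (proj σ')) :
    ((liftVertEquiv hmem hk).symm (Sum.inl v)).1 = (v.1, true) := rfl

theorem liftVertEquiv_symm_inr (hmem : σ' ∈ localLift X f k) (hk : σ'.card < k)
    (v : linkVert X (proj σ')) :
    ((liftVertEquiv hmem hk).symm (Sum.inr v)).1 = (v.1, false) := rfl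

variable (X f k σ') in
/-- The block of the lifted random walk matrix between vertices of sign product `sgn t`. -/
def liftBlock (dd : ℕ) (t : Bool) : Matrix (linkVert X (proj σ')) (linkVert X (proj σ')) ℝ :=
  fun v w => if v.1 ≠ w.1 ∧ {v.1, w.1} ∈ link X (proj σ') then
      if σ'.card + 2 = k + 1 → signF σ' * sgn t = f (proj σ' ∪ {v.1, w.1}) then (dd : ℝ)⁻¹ else 0
    else 0

theorem reindex_linkRW_localLift (hmem : σ' ∈ localLift X f k) (hk : σ'.card < k) (dd : ℕ) :
    Matrix.reindex (liftVertEquiv hmem hk) (liftVertEquiv hmem hk)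
        (linkRW (localLift X f k) σ' dd) =
      Matrix.fromBlocks (liftBlock X f k σ' dd true) (liftBlock X f k σ' dd false)
        (liftBlock X f k σ' dd false) (liftBlock X f k σ' dd true) := by
  ext (i | i) (j | j) <;>
    simp [linkRW_localLift_apply hmem, liftBlock, liftVertEquiv_symm_inl, liftVertEquiv_symm_inr,
      ite_and, sgn]

theorem charpoly_linkRW_localLift (hmem : σ' ∈ localLift X f k) (hk : σ'.card < k) (dd : ℕ) :
    (linkRW (localLift X f k) σ' dd).charpoly =
      (liftBlock X f k σ' dd true + liftBlock X f k σ' dd false).charpoly *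
        (liftBlock X f k σ' dd true - liftBlock X f k σ' dd false).charpoly := by
  rw [← Matrix.charpoly_reindex (liftVertEquiv hmem hk), reindex_linkRW_localLift,
    Matrix.charpoly_fromBlocks_self_swap]

theorem liftBlock_of_ne (h : σ'.card + 2 ≠ k + 1) (dd : ℕ) (t : Bool) :
    liftBlock X f k σ' dd t = linkRW X (proj σ') dd := by
  ext v w
  simp [liftBlock, linkRW, h]

theorem linkRW_two_mul_add_self (σ : Finset V) (d : ℕ) :
    linkRW X σ (2 * d) + linkRW X σ (2 * d) = linkRW X σ d := by
  ext v w
  simp only [Matrix.add_apply, linkRW]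
  split_ifs
  · push_cast; rw [mul_inv]; ring
  · simp

theorem ite_mul_sgn_add_ite_mul_sgn {s t : ℤ} (hs : s = 1 ∨ s = -1) (ht : t = 1 ∨ t = -1)
    (a : ℝ) : ((if s * sgn true = t then a else 0) + if s * sgn false = t then a else 0) = a := by
  rcases hs with rfl | rfl <;> rcases ht with rfl | rfl <;> simp [sgn]

theorem ite_mul_sgn_sub_ite_mul_sgn {s t : ℤ} (hs : s = 1 ∨ s = -1) (ht : t = 1 ∨ t = -1)
    (a : ℝ) :
    ((if s * sgn true = t then a else 0) - if s * sgn false = t then a else 0) =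
      (s * t : ℤ) * a := by
  rcases hs with rfl | rfl <;> rcases ht with rfl | rfl <;> simp [sgn]

theorem liftBlock_true_add_false (htop : σ'.card + 2 = k + 1)
    (hf : ∀ τ, f τ = 1 ∨ f τ = -1) (dd : ℕ) :
    liftBlock X f k σ' dd true + liftBlock X f k σ' dd false = linkRW X (proj σ') dd := by
  ext v w
  simp only [Matrix.add_apply, liftBlock, linkRW, htop, forall_const]
  rw [ite_add_ite, add_zero]
  congr 1
  exact ite_mul_sgn_add_ite_mul_sgn (signF_eq_one_or_eq_neg_one σ') (hf _) _

theorem liftBlock_true_sub_false (htop : σ'.card + 2 = k + 1)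
    (hf : ∀ τ, f τ = 1 ∨ f τ = -1) (dd : ℕ) :
    liftBlock X f k σ' dd true - liftBlock X f k σ' dd false =
      linkRWSigned X (proj σ') dd (fun e => signF σ' * f (proj σ' ∪ e)) := by
  ext v w
  simp only [Matrix.sub_apply, liftBlock, linkRWSigned, htop, forall_const]
  rw [ite_sub_ite, sub_zero, div_eq_mul_inv]
  congr 1
  exact ite_mul_sgn_sub_ite_mul_sgn (signF_eq_one_or_eq_neg_one σ') (hf _) _

end LocalLift

theorem localLift_link_spectra_general {V : Type*} [Fintype V] [DecidableEq V]
    (k : ℕ) (hk : 2 ≤ k) (X : Finset (Finset V)) (d : ℕ → ℕ)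
    (f : Finset V → ℤ) (hf : ∀ τ, f τ = 1 ∨ f τ = -1)
    (σ' : Finset (V × Bool)) (hmem : σ' ∈ localLift X f k) :
    (σ'.card < k - 1 →
      lam (linkRW (localLift X f k) σ' (2 * d σ'.card)) =
        lam (linkRW X (proj σ') (d σ'.card))) ∧
    (σ'.card = k - 1 →
      (linkRW (localLift X f k) σ' (d (k - 1))).charpoly =
        (linkRW X (proj σ') (d (k - 1))).charpoly *
          (linkRWSigned X (proj σ') (d (k - 1))
            (fun e => signF σ' * f (proj σ' ∪ e))).charpoly) := by
  constructor
  · intro hlow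
    apply lam_eq_of_charpoly_eq_mul_X_pow (r := Fintype.card (linkVert X (proj σ')))
    rw [charpoly_linkRW_localLift hmem (by omega), liftBlock_of_ne (by omega),
      liftBlock_of_ne (by omega), linkRW_two_mul_add_self, sub_self, Matrix.charpoly_zero]
  · intro htop
    rw [charpoly_linkRW_localLift hmem (by omega), liftBlock_true_add_false (by omega) hf,
      liftBlock_true_sub_false (by omega) hf]

/-- for a face `σ'` of the `f`-local lift of a
`(d₀,…,d_{k-1})`-regular complex `X`, with `σ = π(σ')`:
if `dim σ' < k-2` then the second largest in absolute value eigenvalue of the random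
walk matrix of the 1-skeleton of the link of `σ'` in the lift equals that of `X_σ`;
if `dim σ' = k-2` then the spectrum of the random walk matrix of the link of `σ'`
is the union (with multiplicity) of the spectra of `A_σ` and of the signed matrix
`A_σ^{f_{σ'}}` (stated as a product of characteristic polynomials). -/
theorem localLift_link_spectra {V : Type*} [Fintype V] [DecidableEq V]
    (k : ℕ) (hk : 2 ≤ k) (X : Finset (Finset V)) (hdc : DownwardClosed X)
    (hpure : Pure X k) (d : ℕ → ℕ) (hreg : Regular X k d)
    (f : Finset V → ℤ) (hf : ∀ τ, f τ = 1 ∨ f τ = -1)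
    (σ' : Finset (V × Bool)) (hmem : σ' ∈ localLift X f k) :
    (σ'.card < k - 1 →
      lam (linkRW (localLift X f k) σ' (2 * d σ'.card)) =
        lam (linkRW X (proj σ') (d σ'.card))) ∧
    (σ'.card = k - 1 →
      (linkRW (localLift X f k) σ' (d (k - 1))).charpoly =
        (linkRW X (proj σ') (d (k - 1))).charpoly *
          (linkRWSigned X (proj σ') (d (k - 1))
            (fun e => signF σ' * f (proj σ' ∪ e))).charpoly) :=
  localLift_link_spectra_general k hk X d f hf σ' hmem

end HDX
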